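/- Let χ : ℝ → ℝ be a smooth function with χ(λ) = 1 for λ ≤ λ₁/2 and χ(λ) = 0 for λ ≥ λ₁, where 0 < λ₁ ≤ 1 is fixed. There is a constant C depending only on χ such that for every t ≥ 1, every λ₀ ∈ ℝ, and every continuously differentiable function F : [t^{−1/2}, 1] → ℂ: | ∫_{t^{−1/2}}^{1} e^{i t (λ − λ₀)²} F(λ) χ(λ) dλ | ≤ C ( t^{−1/2} · sup_{λ ∈ [t^{−1/2}, 1]} |F(λ)| + t^{−3/4} · ( ∫_{t^{−1/2}}^{1} |F′(λ)|² dλ )^{1/2} ). -/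

import Mathlib

open MeasureTheory Complex Real intervalIntegral

namespace SPB

lemma norm_phase (t lam0 x : ℝ) : ‖Complex.exp (I * t * ((x:ℂ) - lam0)^2)‖ = 1 := by
  have h : I * (t:ℂ) * ((x:ℂ) - lam0)^2 = Complex.I * (((t * (x - lam0)^2 : ℝ)) : ℂ) := by
    push_cast; ring
  rw [h, Complex.norm_exp, Complex.I_mul_re, Complex.ofReal_im,
    neg_zero, Real.exp_zero]

lemma integral_inv_sq {lam0 u v : ℝ} (huv : u ≤ v) (hne : ∀ x ∈ Set.Icc u v, x ≠ lam0) :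
    ∫ x in u..v, ((x - lam0)^2)⁻¹ = (u - lam0)⁻¹ - (v - lam0)⁻¹ := by
  have h : ∀ x ∈ Set.uIcc u v, HasDerivAt (fun y => -(y - lam0)⁻¹) (((x - lam0)^2)⁻¹) x := by
    intro x hx
    rw [Set.uIcc_of_le huv] at hx
    have hx0 : x - lam0 ≠ 0 := sub_ne_zero.mpr (hne x hx)
    have h1 := (((hasDerivAt_id x).sub_const lam0).inv hx0).neg
    refine h1.congr_deriv ?_
    simp only [id_eq]
    field_simp
  have hint : IntervalIntegrable (fun x => ((x - lam0)^2)⁻¹) volume u v := by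
    apply ContinuousOn.intervalIntegrable
    apply ContinuousOn.inv₀
    · fun_prop
    · intro x hx; rw [Set.uIcc_of_le huv] at hx
      exact pow_ne_zero _ (sub_ne_zero.mpr (hne x hx))
  rw [intervalIntegral.integral_eq_sub_of_hasDerivAt h hint]
  ring

lemma cauchy_schwarz {u v : ℝ} (huv : u ≤ v) {f g : ℝ → ℝ}
    (hf : ContinuousOn f (Set.Icc u v)) (hg : ContinuousOn g (Set.Icc u v))
    (hf0 : ∀ x ∈ Set.Icc u v, 0 ≤ f x) (hg0 : ∀ x ∈ Set.Icc u v, 0 ≤ g x) :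
    ∫ x in u..v, f x * g x ≤
      Real.sqrt (∫ x in u..v, f x ^ 2) * Real.sqrt (∫ x in u..v, g x ^ 2) := by
  set μ := volume.restrict (Set.Ioc u v) with hμ
  haveI : IsFiniteMeasure μ := by
    constructor
    rw [hμ, Measure.restrict_apply_univ]
    exact measure_Ioc_lt_top
  have hmem : ∀ {h : ℝ → ℝ}, ContinuousOn h (Set.Icc u v) → MemLp h (ENNReal.ofReal 2) μ := by
    intro h hh
    obtain ⟨C, hC⟩ := isCompact_Icc.exists_bound_of_continuousOn hh
    refine MemLp.of_bound ((hh.mono Set.Ioc_subset_Icc_self).aestronglyMeasurable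
      measurableSet_Ioc) C ?_
    refine (ae_restrict_iff' measurableSet_Ioc).mpr (ae_of_all _ fun x hx => ?_)
    exact hC x (Set.Ioc_subset_Icc_self hx)
  have hpq : Real.HolderConjugate 2 2 := Real.HolderConjugate.two_two
  have h0 : ∀ {h : ℝ → ℝ}, (∀ x ∈ Set.Icc u v, 0 ≤ h x) → 0 ≤ᵐ[μ] h := by
    intro h hh
    refine (ae_restrict_iff' measurableSet_Ioc).mpr (ae_of_all _ fun x hx => ?_)
    exact hh x (Set.Ioc_subset_Icc_self hx)
  have key := MeasureTheory.integral_mul_le_Lp_mul_Lq_of_nonneg hpq (h0 hf0) (h0 hg0)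
    (hmem hf) (hmem hg)
  rw [intervalIntegral.integral_of_le huv, intervalIntegral.integral_of_le huv,
    intervalIntegral.integral_of_le huv]
  calc ∫ x in Set.Ioc u v, f x * g x = ∫ x, f x * g x ∂μ := rfl
    _ ≤ (∫ x, f x ^ (2:ℝ) ∂μ) ^ ((1:ℝ)/2) * (∫ x, g x ^ (2:ℝ) ∂μ) ^ ((1:ℝ)/2) := key
    _ = Real.sqrt (∫ x in Set.Ioc u v, f x ^ 2) * Real.sqrt (∫ x in Set.Ioc u v, g x ^ 2) := by
        rw [Real.sqrt_eq_rpow, Real.sqrt_eq_rpow]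
        norm_num [Real.rpow_natCast, Real.rpow_two]
        simp only [hμ, Real.rpow_two]


lemma hasDerivAt_E (t lam0 : ℝ) (x : ℝ) :
    HasDerivAt (fun y : ℝ => Complex.exp (I * t * ((y:ℂ) - lam0)^2))
      (Complex.exp (I * t * ((x:ℂ) - lam0)^2) * (2 * I * t * ((x:ℂ) - lam0))) x := by
  have h2 : HasDerivAt (fun z : ℂ => I * (t:ℂ) * (z - lam0)^2)
      (2 * I * t * ((x:ℂ) - lam0)) (x:ℂ) := by
    have h3 := HasDerivAt.const_mul (I * (t:ℂ))
      (((hasDerivAt_id ((x:ℂ))).sub_const ((lam0:ℂ))).pow 2)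
    refine h3.congr_deriv ?_
    simp only [id_eq]
    ring
  exact h2.cexp.comp_ofReal

lemma hasDerivAt_h (t lam0 : ℝ) (ht : t ≠ 0) (x : ℝ) (hx : x ≠ lam0) :
    HasDerivAt (fun y : ℝ =>
        Complex.exp (I * t * ((y:ℂ) - lam0)^2) * (2 * I * t * ((y:ℂ) - lam0))⁻¹)
      (Complex.exp (I * t * ((x:ℂ) - lam0)^2)
        - (2 * I * (t:ℂ))⁻¹ * (((x:ℂ) - lam0)^2)⁻¹ * Complex.exp (I * t * ((x:ℂ) - lam0)^2))
      x := by
  have hc : (2 * I * (t:ℂ)) ≠ 0 := by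
    simp [Complex.ext_iff, ht, I_ne_zero]
  have hxl : ((x:ℂ) - (lam0:ℂ)) ≠ 0 := by
    rw [sub_ne_zero]
    exact_mod_cast hx
  have hq : HasDerivAt (fun z : ℂ => (2 * I * (t:ℂ) * (z - lam0))⁻¹)
      (-(2 * I * (t:ℂ)) / (2 * I * (t:ℂ) * ((x:ℂ) - lam0))^2) (x:ℂ) := by
    have h1 := HasDerivAt.const_mul (2 * I * (t:ℂ))
      ((hasDerivAt_id ((x:ℂ))).sub_const ((lam0:ℂ)))
    have h2 := h1.inv (mul_ne_zero hc hxl)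
    refine h2.congr_deriv ?_
    simp only [id_eq, mul_one]
  have hE : HasDerivAt (fun z : ℂ => Complex.exp (I * t * (z - lam0)^2))
      (Complex.exp (I * t * ((x:ℂ) - lam0)^2) * (2 * I * t * ((x:ℂ) - lam0))) (x:ℂ) := by
    have h2 : HasDerivAt (fun z : ℂ => I * (t:ℂ) * (z - lam0)^2)
        (2 * I * t * ((x:ℂ) - lam0)) (x:ℂ) := by
      have h3 := HasDerivAt.const_mul (I * (t:ℂ))
        (((hasDerivAt_id ((x:ℂ))).sub_const ((lam0:ℂ))).pow 2)
      refine h3.congr_deriv ?_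
      simp only [id_eq]
      ring
    exact h2.cexp
  have hprod := (hE.mul hq).comp_ofReal (z := x)
  refine hprod.congr_deriv ?_
  have htC : (t:ℂ) ≠ 0 := by exact_mod_cast ht
  field_simp
  ring

lemma side_estimate {t lam0 u v : ℝ} (ht : 1 ≤ t) (huv : u ≤ v)
    {g g' : ℝ → ℂ} {Sg B : ℝ}
    (hg : ContinuousOn g (Set.Icc u v))
    (hg' : ContinuousOn g' (Set.Icc u v))
    (hderiv : ∀ x ∈ Set.Ioo u v, HasDerivAt g (g' x) x)
    (hS : ∀ x ∈ Set.Icc u v, ‖g x‖ ≤ Sg)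
    (hfar : ∀ x ∈ Set.Icc u v, t ^ (-(1/2) : ℝ) ≤ |x - lam0|)
    (hB : (∫ x in u..v, ‖g' x‖ / |x - lam0|) ≤ B) :
    ‖∫ x in u..v, Complex.exp (I * t * ((x:ℂ) - lam0)^2) * g x‖ ≤
      2 * t ^ (-(1/2) : ℝ) * Sg + 1/(2*t) * B := by
  have ht0 : (0:ℝ) < t := lt_of_lt_of_le one_pos ht
  set δ : ℝ := t ^ (-(1/2) : ℝ) with hδdef
  set κ : ℝ := t ^ ((1/2) : ℝ) with hκdef
  have hδ0 : 0 < δ := Real.rpow_pos_of_pos ht0 _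
  have hκ0 : 0 < κ := Real.rpow_pos_of_pos ht0 _
  have hδκ : δ * κ = 1 := by
    rw [hδdef, hκdef, ← Real.rpow_add ht0]
    norm_num
  have htδ : t * δ = κ := by
    rw [hδdef, hκdef]
    nth_rewrite 1 [← Real.rpow_one t]
    rw [← Real.rpow_add ht0]
    norm_num
  have hne : ∀ x ∈ Set.Icc u v, x ≠ lam0 := by
    intro x hx h
    have := hfar x hx
    rw [h, sub_self, abs_zero] at this
    linarith
  set c : ℂ := 2 * I * (t:ℂ) with hcdef
  have hc : c ≠ 0 := by
    rw [hcdef]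
    simp [Complex.ext_iff, ne_of_gt ht0, I_ne_zero]
  have hnc : ‖c‖ = 2 * t := by
    rw [hcdef]
    simp [abs_of_pos ht0]
  set E : ℝ → ℂ := fun x => Complex.exp (I * t * ((x:ℂ) - lam0)^2) with hEdef
  have hEn : ∀ x : ℝ, ‖E x‖ = 1 := fun x => norm_phase t lam0 x
  set h : ℝ → ℂ := fun x => E x * (c * ((x:ℂ) - lam0))⁻¹ with hhdef
  have hcast : ∀ x : ℝ, ‖((x:ℂ) - (lam0:ℂ))‖ = |x - lam0| := by
    intro x
    rw [show ((x:ℂ) - (lam0:ℂ)) = (((x - lam0 : ℝ)):ℂ) by push_cast; ring]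
    rw [Complex.norm_real, Real.norm_eq_abs]
  have hhe : ∀ x : ℝ, ‖h x‖ = (2*t)⁻¹ * |x - lam0|⁻¹ := by
    intro x
    rw [hhdef]
    simp only [norm_mul, hEn, norm_inv, one_mul, hnc, hcast, mul_inv]
  have hhn : ∀ x ∈ Set.Icc u v, ‖h x‖ ≤ δ/2 := by
    intro x hx
    rw [hhe x]
    have h1 : |x - lam0|⁻¹ ≤ δ⁻¹ := by
      apply inv_anti₀ hδ0 (hfar x hx)
    have h2 : δ⁻¹ = κ := by
      field_simp
      linarith [hδκ]
    calc (2*t)⁻¹ * |x - lam0|⁻¹ ≤ (2*t)⁻¹ * κ := by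
          rw [← h2]; exact mul_le_mul_of_nonneg_left h1 (by positivity)
      _ = δ/2 := by
          rw [← htδ]; field_simp
  have hSg0 : 0 ≤ Sg := le_trans (norm_nonneg _) (hS u ⟨le_rfl, huv⟩)
  -- continuity facts
  have hE_cont : Continuous E := by
    rw [hEdef]
    exact Complex.continuous_exp.comp
      (continuous_const.mul ((Complex.continuous_ofReal.sub continuous_const).pow 2))
  have hxlC : ∀ x ∈ Set.Icc u v, ((x:ℂ) - (lam0:ℂ)) ≠ 0 := by
    intro x hx
    rw [sub_ne_zero]
    exact_mod_cast hne x hx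
  have hinv1 : ContinuousOn (fun x : ℝ => (c * ((x:ℂ) - lam0))⁻¹) (Set.Icc u v) := by
    apply ContinuousOn.inv₀
    · exact (continuous_const.mul (Complex.continuous_ofReal.sub continuous_const)).continuousOn
    · intro x hx; exact mul_ne_zero hc (hxlC x hx)
  have hinv2 : ContinuousOn (fun x : ℝ => (((x:ℂ) - lam0)^2)⁻¹) (Set.Icc u v) := by
    apply ContinuousOn.inv₀
    · exact ((Complex.continuous_ofReal.sub continuous_const).pow 2).continuousOn
    · intro x hx; exact pow_ne_zero _ (hxlC x hx)
  have hh_cont : ContinuousOn h (Set.Icc u v) := (hE_cont.continuousOn).mul hinv1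
  -- integrands
  set f1 : ℝ → ℂ := fun x => E x * g x with hf1def
  set f2 : ℝ → ℂ := fun x => (c⁻¹ * (((x:ℂ) - lam0)^2)⁻¹) * (E x * g x) with hf2def
  set f3 : ℝ → ℂ := fun x => h x * g' x with hf3def
  have hint1 : IntervalIntegrable f1 volume u v := by
    apply ContinuousOn.intervalIntegrable
    rw [Set.uIcc_of_le huv]
    exact (hE_cont.continuousOn).mul hg
  have hint2 : IntervalIntegrable f2 volume u v := by
    apply ContinuousOn.intervalIntegrable
    rw [Set.uIcc_of_le huv]
    exact ((continuousOn_const.mul hinv2).mul ((hE_cont.continuousOn).mul hg))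
  have hint3 : IntervalIntegrable f3 volume u v := by
    apply ContinuousOn.intervalIntegrable
    rw [Set.uIcc_of_le huv]
    exact hh_cont.mul hg'
  -- FTC
  have hWd : ∀ x ∈ Set.Ioo u v, HasDerivAt (fun y => h y * g y) (f1 x - f2 x + f3 x) x := by
    intro x hx
    have hx' : x ∈ Set.Icc u v := Set.Ioo_subset_Icc_self hx
    have hh' := hasDerivAt_h t lam0 (ne_of_gt ht0) x (hne x hx')
    have := hh'.mul (hderiv x hx)
    refine this.congr_deriv ?_
    rw [hf1def, hf2def, hf3def, hhdef, hEdef, hcdef]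
    ring
  have hWd_int : IntervalIntegrable (fun x => f1 x - f2 x + f3 x) volume u v :=
    (hint1.sub hint2).add hint3
  have key := intervalIntegral.integral_eq_sub_of_hasDeriv_right_of_le huv
    (hh_cont.mul hg) (fun x hx => (hWd x hx).hasDerivWithinAt) hWd_int
  have hsplit : (∫ x in u..v, (f1 x - f2 x + f3 x)) =
      (∫ x in u..v, f1 x) - (∫ x in u..v, f2 x) + (∫ x in u..v, f3 x) := by
    rw [intervalIntegral.integral_add (hint1.sub hint2) hint3,
      intervalIntegral.integral_sub hint1 hint2]
  have hmain : (∫ x in u..v, f1 x) =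
      (h v * g v - h u * g u) + (∫ x in u..v, f2 x) - (∫ x in u..v, f3 x) := by
    rw [show h v * g v - h u * g u = (h * g) v - (h * g) u from rfl, ← key, hsplit]
    ring
  -- bounds
  have b1 : ‖h v * g v‖ ≤ (δ/2) * Sg := by
    rw [norm_mul]
    exact mul_le_mul (hhn v ⟨huv, le_rfl⟩) (hS v ⟨huv, le_rfl⟩) (norm_nonneg _) (by positivity)
  have b1' : ‖h u * g u‖ ≤ (δ/2) * Sg := by
    rw [norm_mul]
    exact mul_le_mul (hhn u ⟨le_rfl, huv⟩) (hS u ⟨le_rfl, huv⟩) (norm_nonneg _) (by positivity)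
  have hinv_sq_bound : (∫ x in u..v, ((x - lam0)^2)⁻¹) ≤ 2 * κ := by
    rw [integral_inv_sq huv hne]
    have e1 : |(u - lam0)⁻¹| ≤ κ := by
      rw [abs_inv]
      have := hfar u ⟨le_rfl, huv⟩
      calc |u - lam0|⁻¹ ≤ δ⁻¹ := inv_anti₀ hδ0 this
        _ = κ := by field_simp; linarith [hδκ]
    have e2 : |(v - lam0)⁻¹| ≤ κ := by
      rw [abs_inv]
      have := hfar v ⟨huv, le_rfl⟩
      calc |v - lam0|⁻¹ ≤ δ⁻¹ := inv_anti₀ hδ0 this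
        _ = κ := by field_simp; linarith [hδκ]
    have := abs_le.mp e1
    have := abs_le.mp e2
    linarith [abs_le.mp e1, abs_le.mp e2]
  have b2 : ‖∫ x in u..v, f2 x‖ ≤ δ * Sg := by
    have step1 : ‖∫ x in u..v, f2 x‖ ≤ ∫ x in u..v, ‖f2 x‖ :=
      intervalIntegral.norm_integral_le_integral_norm huv
    have step2 : (∫ x in u..v, ‖f2 x‖) ≤
        ∫ x in u..v, ((2*t)⁻¹ * Sg) * ((x - lam0)^2)⁻¹ := by
      apply intervalIntegral.integral_mono_on huv hint2.norm
      · apply ContinuousOn.intervalIntegrable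
        rw [Set.uIcc_of_le huv]
        apply ContinuousOn.mul continuousOn_const
        apply ContinuousOn.inv₀ (((continuous_id.sub continuous_const).pow 2).continuousOn)
        intro x hx; exact pow_ne_zero _ (sub_ne_zero.mpr (hne x hx))
      · intro x hx
        rw [hf2def]
        have hnorm : ‖(c⁻¹ * (((x:ℂ) - lam0)^2)⁻¹) * (E x * g x)‖ =
            (2*t)⁻¹ * ((x - lam0)^2)⁻¹ * ‖g x‖ := by
          rw [norm_mul, norm_mul, norm_mul, norm_inv, norm_inv, hnc, hEn, one_mul]
          congr 2
          rw [norm_pow, hcast, _root_.sq_abs]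
        rw [hnorm]
        have : (0:ℝ) ≤ (2*t)⁻¹ * ((x - lam0)^2)⁻¹ := by positivity
        calc (2*t)⁻¹ * ((x - lam0)^2)⁻¹ * ‖g x‖ ≤ (2*t)⁻¹ * ((x - lam0)^2)⁻¹ * Sg :=
              mul_le_mul_of_nonneg_left (hS x hx) this
          _ = ((2*t)⁻¹ * Sg) * ((x - lam0)^2)⁻¹ := by ring
    have step3 : (∫ x in u..v, ((2*t)⁻¹ * Sg) * ((x - lam0)^2)⁻¹) ≤ (2*t)⁻¹ * Sg * (2*κ) := by
      rw [intervalIntegral.integral_const_mul]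
      exact mul_le_mul_of_nonneg_left hinv_sq_bound (by positivity)
    have harith : (2*t)⁻¹ * Sg * (2*κ) = δ * Sg := by
      rw [← htδ]
      field_simp
    linarith
  have b3 : ‖∫ x in u..v, f3 x‖ ≤ (2*t)⁻¹ * B := by
    have step1 : ‖∫ x in u..v, f3 x‖ ≤ ∫ x in u..v, ‖f3 x‖ :=
      intervalIntegral.norm_integral_le_integral_norm huv
    have step2 : (∫ x in u..v, ‖f3 x‖) ≤ ∫ x in u..v, (2*t)⁻¹ * (‖g' x‖ / |x - lam0|) := by
      apply intervalIntegral.integral_mono_on huv hint3.norm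
      · apply ContinuousOn.intervalIntegrable
        rw [Set.uIcc_of_le huv]
        apply ContinuousOn.mul continuousOn_const
        apply ContinuousOn.div (hg'.norm) ((continuous_id.sub continuous_const).abs.continuousOn)
        intro x hx
        exact abs_ne_zero.mpr (sub_ne_zero.mpr (hne x hx))
      · intro x hx
        rw [hf3def, norm_mul, hhe x]
        rw [div_eq_mul_inv]
        ring_nf
        exact le_of_eq (by ring)
    have step3 : (∫ x in u..v, (2*t)⁻¹ * (‖g' x‖ / |x - lam0|)) ≤ (2*t)⁻¹ * B := by
      rw [intervalIntegral.integral_const_mul]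
      exact mul_le_mul_of_nonneg_left hB (by positivity)
    linarith
  have tri : ‖∫ x in u..v, f1 x‖ ≤
      ‖h v * g v‖ + ‖h u * g u‖ + ‖∫ x in u..v, f2 x‖ + ‖∫ x in u..v, f3 x‖ := by
    rw [hmain]
    have t1 := norm_sub_le ((h v * g v - h u * g u) + (∫ x in u..v, f2 x)) (∫ x in u..v, f3 x)
    have t2 := norm_add_le (h v * g v - h u * g u) (∫ x in u..v, f2 x)
    have t3 := norm_sub_le (h v * g v) (h u * g u)
    linarith
  have final : ‖∫ x in u..v, f1 x‖ ≤ 2 * δ * Sg + (2*t)⁻¹ * B := by linarith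
  calc ‖∫ x in u..v, Complex.exp (I * t * ((x:ℂ) - lam0)^2) * g x‖
      = ‖∫ x in u..v, f1 x‖ := rfl
    _ ≤ 2 * δ * Sg + (2*t)⁻¹ * B := final
    _ = 2 * δ * Sg + 1/(2*t) * B := by rw [one_div]


lemma integral_inv_sq_le {t lam0 u v : ℝ} (ht0 : 0 < t) (huv : u ≤ v)
    (hfar : ∀ x ∈ Set.Icc u v, t ^ (-(1/2) : ℝ) ≤ |x - lam0|) :
    (∫ x in u..v, ((x - lam0)^2)⁻¹) ≤ 2 * t ^ ((1/2) : ℝ) := by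
  have hδ0 : 0 < t ^ (-(1/2) : ℝ) := Real.rpow_pos_of_pos ht0 _
  have hδκ : t ^ (-(1/2) : ℝ) * t ^ ((1/2) : ℝ) = 1 := by
    rw [← Real.rpow_add ht0]; norm_num
  have hκ0 : 0 < t ^ ((1/2) : ℝ) := Real.rpow_pos_of_pos ht0 _
  have hne : ∀ x ∈ Set.Icc u v, x ≠ lam0 := by
    intro x hx h
    have := hfar x hx
    rw [h, sub_self, abs_zero] at this
    linarith
  rw [integral_inv_sq huv hne]
  have e1 : |(u - lam0)⁻¹| ≤ t ^ ((1/2) : ℝ) := by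
    rw [abs_inv]
    calc |u - lam0|⁻¹ ≤ (t ^ (-(1/2) : ℝ))⁻¹ := inv_anti₀ hδ0 (hfar u ⟨le_rfl, huv⟩)
      _ = t ^ ((1/2) : ℝ) := by field_simp; linarith [hδκ]
  have e2 : |(v - lam0)⁻¹| ≤ t ^ ((1/2) : ℝ) := by
    rw [abs_inv]
    calc |v - lam0|⁻¹ ≤ (t ^ (-(1/2) : ℝ))⁻¹ := inv_anti₀ hδ0 (hfar v ⟨huv, le_rfl⟩)
      _ = t ^ ((1/2) : ℝ) := by field_simp; linarith [hδκ]
  linarith [abs_le.mp e1, abs_le.mp e2]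

end SPB

set_option maxHeartbeats 1600000 in
open SPB in
/-- Lemma 6.4 of the paper (a stationary phase variant). -/
theorem stationary_phase_bound (lam1 : ℝ) (h0 : 0 < lam1) (h1 : lam1 ≤ 1)
    (χ : ℝ → ℝ) (hχ : ContDiff ℝ (⊤ : ℕ∞) χ)
    (hχ1 : ∀ lam : ℝ, lam ≤ lam1 / 2 → χ lam = 1)
    (hχ0 : ∀ lam : ℝ, lam1 ≤ lam → χ lam = 0) :
    ∃ C : ℝ, 0 < C ∧ ∀ t : ℝ, 1 ≤ t → ∀ lam0 : ℝ, ∀ F : ℝ → ℂ,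
      ContDiffOn ℝ 1 F (Set.Icc (t ^ (-(1 / 2) : ℝ)) 1) →
      ‖∫ lam in (t ^ (-(1 / 2) : ℝ))..1,
          Complex.exp (Complex.I * (t : ℂ) * ((lam : ℂ) - (lam0 : ℂ)) ^ 2) * F lam * (χ lam : ℂ)‖ ≤
        C * (t ^ (-(1 / 2) : ℝ) * (⨆ lam ∈ Set.Icc (t ^ (-(1 / 2) : ℝ)) 1, ‖F lam‖) +
          t ^ (-(3 / 4) : ℝ) * Real.sqrt (∫ lam in (t ^ (-(1 / 2) : ℝ))..1,
            ‖derivWithin F (Set.Icc (t ^ (-(1 / 2) : ℝ)) 1) lam‖ ^ 2)) := by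
  classical
  obtain ⟨M0', hM0'⟩ := (isCompact_Icc (a := (0:ℝ)) (b := 1)).exists_bound_of_continuousOn
    (hχ.continuous.continuousOn)
  obtain ⟨M1', hM1'⟩ := (isCompact_Icc (a := (0:ℝ)) (b := 1)).exists_bound_of_continuousOn
    ((hχ.continuous_deriv (by simp)).continuousOn)
  set M0 : ℝ := max M0' 1 with hM0def
  set M1 : ℝ := max M1' 0 with hM1def
  have hM0one : 1 ≤ M0 := le_max_right _ _
  have hM0pos : 0 < M0 := lt_of_lt_of_le one_pos hM0one
  have hM1nn : 0 ≤ M1 := le_max_right _ _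
  refine ⟨6*M0 + 2*M1 + 2, by linarith, ?_⟩
  intro t ht lam0 F hF
  have ht0 : (0:ℝ) < t := lt_of_lt_of_le one_pos ht
  set a : ℝ := t ^ (-(1 / 2) : ℝ) with hadef
  set κ : ℝ := t ^ ((1/2) : ℝ) with hκdef
  set τ : ℝ := t ^ (-(3 / 4) : ℝ) with hτdef
  have ha0 : 0 < a := Real.rpow_pos_of_pos ht0 _
  have hκ0 : 0 < κ := Real.rpow_pos_of_pos ht0 _
  have hτ0 : 0 < τ := Real.rpow_pos_of_pos ht0 _
  have ha1 : a ≤ 1 := Real.rpow_le_one_of_one_le_of_nonpos ht (by norm_num)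
  have haκ : a * κ = 1 := by
    rw [hadef, hκdef, ← Real.rpow_add ht0]; norm_num
  have htaκ : t * a = κ := by
    rw [hadef, hκdef]
    nth_rewrite 1 [← Real.rpow_one t]
    rw [← Real.rpow_add ht0]
    norm_num
  set S : ℝ := ⨆ lam ∈ Set.Icc a 1, ‖F lam‖ with hSdef
  set N : ℝ := Real.sqrt (∫ lam in a..1, ‖derivWithin F (Set.Icc a 1) lam‖ ^ 2) with hNdef
  have hN0 : 0 ≤ N := Real.sqrt_nonneg _
  -- sup facts
  obtain ⟨MF, hMF⟩ := isCompact_Icc.exists_bound_of_continuousOn hF.continuousOn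
  have hbdd : BddAbove (Set.range fun lam => ⨆ _ : lam ∈ Set.Icc a 1, ‖F lam‖) := by
    refine ⟨max MF 0, ?_⟩
    rintro y ⟨x, rfl⟩
    show (⨆ _ : x ∈ Set.Icc a 1, ‖F x‖) ≤ max MF 0
    by_cases hx : x ∈ Set.Icc a 1
    · rw [ciSup_pos hx]
      exact le_trans (hMF x hx) (le_max_left _ _)
    · simp [hx, Real.iSup_of_isEmpty, le_max_right]
  have hFS : ∀ x ∈ Set.Icc a 1, ‖F x‖ ≤ S := by
    intro x hx
    have h2 : (⨆ _ : x ∈ Set.Icc a 1, ‖F x‖) ≤ S := le_ciSup hbdd x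
    rwa [ciSup_pos hx] at h2
  have hS0 : 0 ≤ S := le_trans (norm_nonneg (F a)) (hFS a ⟨le_rfl, ha1⟩)
  have hRHS0 : 0 ≤ (6*M0 + 2*M1 + 2) * (a * S + τ * N) := by
    have := mul_nonneg (mul_nonneg ha0.le hS0) (le_refl (0:ℝ))
    apply mul_nonneg (by linarith)
    have h1 : 0 ≤ a * S := mul_nonneg ha0.le hS0
    have h2 : 0 ≤ τ * N := mul_nonneg hτ0.le hN0
    linarith
  by_cases hdeg : a = 1
  · rw [hdeg]
    rw [intervalIntegral.integral_same, norm_zero]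
    rw [← hdeg]
    exact hRHS0
  have ha1' : a < 1 := lt_of_le_of_ne ha1 hdeg
  -- derivative of F within
  set F'w : ℝ → ℂ := fun lam => derivWithin F (Set.Icc a 1) lam with hF'wdef
  have hF'cont : ContinuousOn F'w (Set.Icc a 1) :=
    hF.continuousOn_derivWithin (uniqueDiffOn_Icc ha1') le_rfl
  set g : ℝ → ℂ := fun lam => F lam * ((χ lam : ℝ) : ℂ) with hgdef
  set g' : ℝ → ℂ := fun lam => F'w lam * ((χ lam : ℝ) : ℂ) + F lam * ((deriv χ lam : ℝ) : ℂ)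
    with hg'def
  have hχcont : Continuous χ := hχ.continuous
  have hχ'cont : Continuous (deriv χ) := hχ.continuous_deriv (by simp)
  have hgcont : ContinuousOn g (Set.Icc a 1) :=
    hF.continuousOn.mul ((Complex.continuous_ofReal.comp hχcont).continuousOn)
  have hg'cont : ContinuousOn g' (Set.Icc a 1) :=
    (hF'cont.mul ((Complex.continuous_ofReal.comp hχcont).continuousOn)).add
      (hF.continuousOn.mul ((Complex.continuous_ofReal.comp hχ'cont).continuousOn))
  have hgderiv : ∀ x ∈ Set.Ioo a 1, HasDerivAt g (g' x) x := by
    intro x hx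
    have hmem : Set.Icc a 1 ∈ nhds x := Icc_mem_nhds hx.1 hx.2
    have hF1 : HasDerivAt F (F'w x) x :=
      ((hF.differentiableOn one_ne_zero x (Set.Ioo_subset_Icc_self hx)).hasDerivWithinAt).hasDerivAt
        hmem
    have hχ1' : HasDerivAt (fun y => ((χ y : ℝ) : ℂ)) ((deriv χ x : ℝ) : ℂ) x :=
      ((hχ.differentiable (by simp)).differentiableAt.hasDerivAt).ofReal_comp
    exact hF1.mul hχ1'
  have hsub01 : Set.Icc a 1 ⊆ Set.Icc (0:ℝ) 1 := Set.Icc_subset_Icc ha0.le le_rfl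
  have hχbound : ∀ x ∈ Set.Icc a 1, |χ x| ≤ M0 := by
    intro x hx
    exact le_trans (hM0' x (hsub01 hx)) (le_max_left _ _)
  have hχ'bound : ∀ x ∈ Set.Icc a 1, |deriv χ x| ≤ M1 := by
    intro x hx
    exact le_trans (hM1' x (hsub01 hx)) (le_max_left _ _)
  have hgS : ∀ x ∈ Set.Icc a 1, ‖g x‖ ≤ M0 * S := by
    intro x hx
    rw [hgdef]
    simp only [norm_mul, Complex.norm_real, Real.norm_eq_abs]
    calc ‖F x‖ * |χ x| ≤ S * M0 :=
          mul_le_mul (hFS x hx) (hχbound x hx) (abs_nonneg _) hS0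
      _ = M0 * S := mul_comm _ _
  have hg'S : ∀ x ∈ Set.Icc a 1, ‖g' x‖ ≤ M0 * ‖F'w x‖ + M1 * S := by
    intro x hx
    rw [hg'def]
    calc ‖F'w x * ((χ x : ℝ) : ℂ) + F x * ((deriv χ x : ℝ) : ℂ)‖
        ≤ ‖F'w x * ((χ x : ℝ) : ℂ)‖ + ‖F x * ((deriv χ x : ℝ) : ℂ)‖ := norm_add_le _ _
      _ = ‖F'w x‖ * |χ x| + ‖F x‖ * |deriv χ x| := by
          simp only [norm_mul, Complex.norm_real, Real.norm_eq_abs]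
      _ ≤ ‖F'w x‖ * M0 + S * M1 := by
          apply add_le_add
          · exact mul_le_mul_of_nonneg_left (hχbound x hx) (norm_nonneg _)
          · exact mul_le_mul (hFS x hx) (hχ'bound x hx) (abs_nonneg _) hS0
      _ = M0 * ‖F'w x‖ + M1 * S := by ring
  -- phase
  set Q : ℝ → ℂ := fun lam =>
    Complex.exp (Complex.I * (t:ℂ) * ((lam:ℂ) - (lam0:ℂ))^2) * g lam with hQdef
  have hphase_cont : Continuous fun lam : ℝ =>
      Complex.exp (Complex.I * (t:ℂ) * ((lam:ℂ) - (lam0:ℂ))^2) :=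
    Complex.continuous_exp.comp
      (continuous_const.mul ((Complex.continuous_ofReal.sub continuous_const).pow 2))
  have hQcont : ContinuousOn Q (Set.Icc a 1) := hphase_cont.continuousOn.mul hgcont
  have hQi : ∀ u v : ℝ, a ≤ u → v ≤ 1 → u ≤ v → IntervalIntegrable Q volume u v := by
    intro u v hu hv huv
    apply ContinuousOn.intervalIntegrable
    apply hQcont.mono
    rw [Set.uIcc_of_le huv]
    exact Set.Icc_subset_Icc hu hv
  -- endpoints of the splitting
  set q : ℝ := max a (min 1 (lam0 - a)) with hqdef
  set p : ℝ := max a (min 1 (lam0 + a)) with hpdef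
  have haq : a ≤ q := le_max_left _ _
  have hap : a ≤ p := le_max_left _ _
  have hq1 : q ≤ 1 := max_le ha1 (min_le_left _ _)
  have hp1 : p ≤ 1 := max_le ha1 (min_le_left _ _)
  have hqp : q ≤ p := by
    rw [hqdef, hpdef]
    apply max_le_max le_rfl
    apply min_le_min le_rfl
    linarith
  have hpq2 : p - q ≤ 2 * a := by
    rw [hpdef, hqdef]
    simp only [max_def, min_def]
    split_ifs <;> linarith
  -- rewrite the goal integrand
  have goalEq : (∫ lam in a..1,
      Complex.exp (Complex.I * (t:ℂ) * ((lam:ℂ) - (lam0:ℂ))^2) * F lam * ((χ lam : ℝ) : ℂ)) =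
      ∫ lam in a..1, Q lam := by
    apply intervalIntegral.integral_congr
    intro lam _
    rw [hQdef, hgdef]
    ring
  rw [goalEq]
  -- split the integral
  have hsplit1 : (∫ lam in a..q, Q lam) + (∫ lam in q..p, Q lam) = ∫ lam in a..p, Q lam :=
    intervalIntegral.integral_add_adjacent_intervals (hQi a q le_rfl hq1 haq)
      (hQi q p haq hp1 hqp)
  have hsplit2 : (∫ lam in a..p, Q lam) + (∫ lam in p..1, Q lam) = ∫ lam in a..1, Q lam :=
    intervalIntegral.integral_add_adjacent_intervals (hQi a p le_rfl hp1 hap)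
      (hQi p 1 hap le_rfl hp1)
  have htri : ‖∫ lam in a..1, Q lam‖ ≤
      ‖∫ lam in a..q, Q lam‖ + ‖∫ lam in q..p, Q lam‖ + ‖∫ lam in p..1, Q lam‖ := by
    rw [← hsplit2, ← hsplit1]
    calc ‖((∫ lam in a..q, Q lam) + ∫ lam in q..p, Q lam) + ∫ lam in p..1, Q lam‖
        ≤ ‖(∫ lam in a..q, Q lam) + ∫ lam in q..p, Q lam‖ + ‖∫ lam in p..1, Q lam‖ :=
          norm_add_le _ _
      _ ≤ ‖∫ lam in a..q, Q lam‖ + ‖∫ lam in q..p, Q lam‖ + ‖∫ lam in p..1, Q lam‖ := by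
          have := norm_add_le (∫ lam in a..q, Q lam) (∫ lam in q..p, Q lam)
          linarith
  -- middle piece
  have hmid : ‖∫ lam in q..p, Q lam‖ ≤ M0 * S * (2 * a) := by
    have hb : ∀ x ∈ Set.uIoc q p, ‖Q x‖ ≤ M0 * S := by
      intro x hx
      rw [Set.uIoc_of_le hqp] at hx
      have hx' : x ∈ Set.Icc a 1 := ⟨le_trans haq (le_of_lt hx.1), le_trans hx.2 hp1⟩
      rw [hQdef]
      calc ‖Complex.exp (Complex.I * (t:ℂ) * ((x:ℂ) - (lam0:ℂ))^2) * g x‖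
          = ‖g x‖ := by rw [norm_mul, norm_phase, one_mul]
        _ ≤ M0 * S := hgS x hx'
    calc ‖∫ lam in q..p, Q lam‖ ≤ M0 * S * |p - q| :=
          intervalIntegral.norm_integral_le_of_norm_le_const hb
      _ ≤ M0 * S * (2 * a) := by
          apply mul_le_mul_of_nonneg_left _ (by positivity)
          rw [_root_.abs_of_nonneg (by linarith : (0:ℝ) ≤ p - q)]
          exact hpq2
  -- generic side bound
  have sideB : ∀ u v : ℝ, a ≤ u → u ≤ v → v ≤ 1 →
      (∀ x ∈ Set.Icc u v, a ≤ |x - lam0|) →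
      ‖∫ x in u..v, Q x‖ ≤
        2 * a * (M0 * S) + 1/(2*t) * (M0 * (N * Real.sqrt (2*κ)) + M1 * S * κ) := by
    intro u v hu huv hv hfar
    have hsub : Set.Icc u v ⊆ Set.Icc a 1 := Set.Icc_subset_Icc hu hv
    have hne : ∀ x ∈ Set.Icc u v, x ≠ lam0 := by
      intro x hx h
      have := hfar x hx
      rw [h, sub_self, abs_zero] at this
      linarith
    -- the B bound
    have habs_inv_cont : ContinuousOn (fun x : ℝ => |x - lam0|⁻¹) (Set.Icc u v) := by
      apply ContinuousOn.inv₀ ((continuous_id.sub continuous_const).abs.continuousOn)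
      intro x hx
      exact abs_ne_zero.mpr (sub_ne_zero.mpr (hne x hx))
    have hCS : (∫ x in u..v, ‖F'w x‖ * |x - lam0|⁻¹) ≤ N * Real.sqrt (2*κ) := by
      have h1 := cauchy_schwarz huv ((hF'cont.mono hsub).norm) habs_inv_cont
        (fun x _ => norm_nonneg _) (fun x _ => inv_nonneg.mpr (abs_nonneg _))
      have h2 : Real.sqrt (∫ x in u..v, ‖F'w x‖^2) ≤ N := by
        rw [hNdef]
        apply Real.sqrt_le_sqrt
        have hc2 : ContinuousOn (fun x : ℝ => ‖F'w x‖^2) (Set.Icc a 1) := (hF'cont.norm).pow 2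
        have hi : ∀ u' v' : ℝ, a ≤ u' → v' ≤ 1 → u' ≤ v' →
            IntervalIntegrable (fun x : ℝ => ‖F'w x‖^2) volume u' v' := by
          intro u' v' hu' hv' huv'
          apply ContinuousOn.intervalIntegrable
          apply hc2.mono
          rw [Set.uIcc_of_le huv']
          exact Set.Icc_subset_Icc hu' hv'
        have e1 : (∫ x in a..u, ‖F'w x‖^2) + (∫ x in u..v, ‖F'w x‖^2)
            = ∫ x in a..v, ‖F'w x‖^2 :=
          intervalIntegral.integral_add_adjacent_intervals
            (hi a u le_rfl (le_trans huv hv) hu) (hi u v hu hv huv)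
        have e2 : (∫ x in a..v, ‖F'w x‖^2) + (∫ x in v..1, ‖F'w x‖^2)
            = ∫ x in a..1, ‖F'w x‖^2 :=
          intervalIntegral.integral_add_adjacent_intervals
            (hi a v le_rfl hv (le_trans hu huv)) (hi v 1 (le_trans hu huv) le_rfl hv)
        have n1 : 0 ≤ ∫ x in a..u, ‖F'w x‖^2 :=
          intervalIntegral.integral_nonneg hu (fun x _ => sq_nonneg _)
        have n2 : 0 ≤ ∫ x in v..1, ‖F'w x‖^2 :=
          intervalIntegral.integral_nonneg hv (fun x _ => sq_nonneg _)
        linarith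
      have h3 : Real.sqrt (∫ x in u..v, (|x - lam0|⁻¹)^2) ≤ Real.sqrt (2*κ) := by
        apply Real.sqrt_le_sqrt
        have hcongr : (∫ x in u..v, (|x - lam0|⁻¹)^2) = ∫ x in u..v, ((x - lam0)^2)⁻¹ := by
          apply intervalIntegral.integral_congr
          intro x _
          show (|x - lam0|⁻¹)^2 = ((x - lam0)^2)⁻¹
          rw [inv_pow, _root_.sq_abs]
        rw [hcongr, hκdef]
        exact integral_inv_sq_le ht0 huv (fun x hx => hfar x hx)
      calc (∫ x in u..v, ‖F'w x‖ * |x - lam0|⁻¹)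
          ≤ Real.sqrt (∫ x in u..v, ‖F'w x‖^2) * Real.sqrt (∫ x in u..v, (|x - lam0|⁻¹)^2) := h1
        _ ≤ N * Real.sqrt (2*κ) := mul_le_mul h2 h3 (Real.sqrt_nonneg _) hN0
    have habs_int : IntervalIntegrable (fun x : ℝ => |x - lam0|⁻¹) volume u v := by
      apply ContinuousOn.intervalIntegrable
      rw [Set.uIcc_of_le huv]
      exact habs_inv_cont
    have hIinv : (∫ x in u..v, |x - lam0|⁻¹) ≤ κ := by
      have hpt : ∀ x ∈ Set.Icc u v, |x - lam0|⁻¹ ≤ κ := by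
        intro x hx
        calc |x - lam0|⁻¹ ≤ a⁻¹ := inv_anti₀ ha0 (hfar x hx)
          _ = κ := by field_simp; linarith [haκ]
      calc (∫ x in u..v, |x - lam0|⁻¹) ≤ ∫ _x in u..v, κ :=
            intervalIntegral.integral_mono_on huv habs_int intervalIntegrable_const hpt
        _ = κ * (v - u) := by rw [intervalIntegral.integral_const, smul_eq_mul, mul_comm]
        _ ≤ κ * 1 := mul_le_mul_of_nonneg_left (by linarith) hκ0.le
        _ = κ := mul_one κ
    have i1 : IntervalIntegrable (fun x => M0 * (‖F'w x‖ * |x - lam0|⁻¹)) volume u v := by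
      apply ContinuousOn.intervalIntegrable
      rw [Set.uIcc_of_le huv]
      exact continuousOn_const.mul (((hF'cont.mono hsub).norm).mul habs_inv_cont)
    have i2 : IntervalIntegrable (fun x => (M1 * S) * |x - lam0|⁻¹) volume u v := by
      apply ContinuousOn.intervalIntegrable
      rw [Set.uIcc_of_le huv]
      exact continuousOn_const.mul habs_inv_cont
    have hBbound : (∫ x in u..v, ‖g' x‖ / |x - lam0|) ≤
        M0 * (N * Real.sqrt (2*κ)) + M1 * S * κ := by
      have hmono : (∫ x in u..v, ‖g' x‖ / |x - lam0|) ≤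
          ∫ x in u..v, (M0 * (‖F'w x‖ * |x - lam0|⁻¹) + (M1 * S) * |x - lam0|⁻¹) := by
        apply intervalIntegral.integral_mono_on huv _ (i1.add i2)
        · intro x hx
          rw [div_eq_mul_inv]
          have hg'x := hg'S x (hsub hx)
          have hinv0 : (0:ℝ) ≤ |x - lam0|⁻¹ := inv_nonneg.mpr (abs_nonneg _)
          calc ‖g' x‖ * |x - lam0|⁻¹ ≤ (M0 * ‖F'w x‖ + M1 * S) * |x - lam0|⁻¹ :=
                mul_le_mul_of_nonneg_right hg'x hinv0
            _ = M0 * (‖F'w x‖ * |x - lam0|⁻¹) + (M1 * S) * |x - lam0|⁻¹ := by ring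
        · apply ContinuousOn.intervalIntegrable
          rw [Set.uIcc_of_le huv]
          apply ContinuousOn.div ((hg'cont.mono hsub).norm)
            ((continuous_id.sub continuous_const).abs.continuousOn)
          intro x hx
          exact abs_ne_zero.mpr (sub_ne_zero.mpr (hne x hx))
      have hsplitint : (∫ x in u..v,
            (M0 * (‖F'w x‖ * |x - lam0|⁻¹) + (M1 * S) * |x - lam0|⁻¹)) =
          M0 * (∫ x in u..v, ‖F'w x‖ * |x - lam0|⁻¹) +
            (M1 * S) * (∫ x in u..v, |x - lam0|⁻¹) := by
        rw [intervalIntegral.integral_add i1 i2, intervalIntegral.integral_const_mul,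
          intervalIntegral.integral_const_mul]
      have hM1S : 0 ≤ M1 * S := mul_nonneg hM1nn hS0
      have hfin : M0 * (∫ x in u..v, ‖F'w x‖ * |x - lam0|⁻¹) +
            (M1 * S) * (∫ x in u..v, |x - lam0|⁻¹) ≤
          M0 * (N * Real.sqrt (2*κ)) + M1 * S * κ := by
        have c1 := mul_le_mul_of_nonneg_left hCS hM0pos.le
        have c2 := mul_le_mul_of_nonneg_left hIinv hM1S
        linarith
      linarith
    have hIoo : Set.Ioo u v ⊆ Set.Ioo a 1 := Set.Ioo_subset_Ioo hu hv
    exact side_estimate ht huv (hgcont.mono hsub) (hg'cont.mono hsub)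
      (fun x hx => hgderiv x (hIoo hx)) (fun x hx => hgS x (hsub hx))
      (fun x hx => hfar x hx) hBbound
  -- apply to the two sides
  have hsideR : ‖∫ lam in p..1, Q lam‖ ≤
      2 * a * (M0 * S) + 1/(2*t) * (M0 * (N * Real.sqrt (2*κ)) + M1 * S * κ) := by
    by_cases hp : p = 1
    · rw [hp, intervalIntegral.integral_same, norm_zero]
      have r1 : 0 ≤ 2*a*(M0*S) := mul_nonneg (by linarith) (mul_nonneg hM0pos.le hS0)
      have r2 : 0 ≤ M0*(N*Real.sqrt (2*κ)) :=
        mul_nonneg hM0pos.le (mul_nonneg hN0 (Real.sqrt_nonneg _))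
      have r3 : 0 ≤ M1*S*κ := mul_nonneg (mul_nonneg hM1nn hS0) hκ0.le
      have r4 : 0 ≤ 1/(2*t) := by positivity
      linarith [mul_nonneg r4 (add_nonneg r2 r3)]
    · have hp' : p < 1 := lt_of_le_of_ne hp1 hp
      have hfarR : ∀ x ∈ Set.Icc p 1, a ≤ |x - lam0| := by
        intro x hx
        have hlt := hp'
        rw [hpdef] at hlt
        have h2 := (max_lt_iff.mp hlt).2
        have h3 : lam0 + a < 1 := by
          rcases min_lt_iff.mp h2 with h | h
          · linarith
          · exact h
        have h4 : lam0 + a ≤ p := by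
          calc lam0 + a = min 1 (lam0 + a) := (min_eq_right h3.le).symm
            _ ≤ p := by rw [hpdef]; exact le_max_right _ _
        have h5 : a ≤ x - lam0 := by
          have := hx.1
          linarith
        exact le_trans h5 (le_abs_self _)
      exact sideB p 1 hap hp1 le_rfl hfarR
  have hsideL : ‖∫ lam in a..q, Q lam‖ ≤
      2 * a * (M0 * S) + 1/(2*t) * (M0 * (N * Real.sqrt (2*κ)) + M1 * S * κ) := by
    by_cases hq : q = a
    · rw [hq, intervalIntegral.integral_same, norm_zero]
      have r1 : 0 ≤ 2*a*(M0*S) := mul_nonneg (by linarith) (mul_nonneg hM0pos.le hS0)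
      have r2 : 0 ≤ M0*(N*Real.sqrt (2*κ)) :=
        mul_nonneg hM0pos.le (mul_nonneg hN0 (Real.sqrt_nonneg _))
      have r3 : 0 ≤ M1*S*κ := mul_nonneg (mul_nonneg hM1nn hS0) hκ0.le
      have r4 : 0 ≤ 1/(2*t) := by positivity
      linarith [mul_nonneg r4 (add_nonneg r2 r3)]
    · have hq' : a < q := lt_of_le_of_ne haq (Ne.symm hq)
      have hfarL : ∀ x ∈ Set.Icc a q, a ≤ |x - lam0| := by
        intro x hx
        have hlt := hq'
        rw [hqdef] at hlt
        have h2 : a < min 1 (lam0 - a) := by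
          rcases lt_max_iff.mp hlt with h | h
          · exact absurd h (lt_irrefl a)
          · exact h
        have h2' : a < lam0 - a := lt_of_lt_of_le h2 (min_le_right _ _)
        have h3 : q ≤ lam0 - a := by
          rw [hqdef]
          exact max_le (by linarith) (min_le_right _ _)
        have h5 : a ≤ lam0 - x := by
          have := hx.2
          linarith
        calc a ≤ lam0 - x := h5
          _ ≤ |lam0 - x| := le_abs_self _
          _ = |x - lam0| := abs_sub_comm _ _
      exact sideB a q le_rfl haq hq1 hfarL
  -- remaining arithmetic
  have hsqrtκ : Real.sqrt κ = t ^ ((1/4) : ℝ) := by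
    rw [hκdef, Real.sqrt_eq_rpow, ← Real.rpow_mul ht0.le]
    norm_num
  have hsqrt2 : Real.sqrt 2 ≤ 2 := by
    nlinarith [Real.sq_sqrt (show (0:ℝ) ≤ 2 by norm_num), Real.sqrt_nonneg 2]
  have hsqrt2κ : Real.sqrt (2*κ) ≤ 2 * t ^ ((1/4) : ℝ) := by
    rw [Real.sqrt_mul (by norm_num : (0:ℝ) ≤ 2), hsqrtκ]
    exact mul_le_mul_of_nonneg_right hsqrt2 (Real.rpow_nonneg ht0.le _)
  have hquarter : t ^ ((1/4) : ℝ) / t = τ := by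
    rw [hτdef, div_eq_mul_inv, show t⁻¹ = t ^ (-1 : ℝ) from (Real.rpow_neg_one t).symm,
      ← Real.rpow_add ht0]
    norm_num
  have hterm1 : 1/(2*t) * (M0 * (N * Real.sqrt (2*κ))) ≤ M0 * (τ * N) := by
    have hh1 : 0 ≤ 1/(2*t) := by positivity
    have hh2 : 1/(2*t) * (M0 * (N * Real.sqrt (2*κ))) ≤
        1/(2*t) * (M0 * (N * (2 * t ^ ((1/4):ℝ)))) := by
      apply mul_le_mul_of_nonneg_left _ hh1
      apply mul_le_mul_of_nonneg_left _ hM0pos.le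
      exact mul_le_mul_of_nonneg_left hsqrt2κ hN0
    have hh3 : 1/(2*t) * (M0 * (N * (2 * t ^ ((1/4):ℝ)))) = M0 * ((t ^ ((1/4):ℝ) / t) * N) := by
      field_simp
    rw [hh3, hquarter] at hh2
    exact hh2
  have hterm2 : 1/(2*t) * (M1 * S * κ) ≤ M1 * (a * S) := by
    rw [show κ = t * a from htaκ.symm]
    have hh1 : 1/(2*t) * (M1 * S * (t * a)) = (M1 * (a * S))/2 := by
      field_simp
    rw [hh1]
    have hh2 : 0 ≤ M1 * (a * S) := mul_nonneg hM1nn (mul_nonneg ha0.le hS0)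
    linarith
  have hSB : 2 * a * (M0 * S) + 1/(2*t) * (M0 * (N * Real.sqrt (2*κ)) + M1 * S * κ) ≤
      2 * a * (M0 * S) + M0 * (τ * N) + M1 * (a * S) := by
    have hexp : 1/(2*t) * (M0 * (N * Real.sqrt (2*κ)) + M1 * S * κ) =
        1/(2*t) * (M0 * (N * Real.sqrt (2*κ))) + 1/(2*t) * (M1 * S * κ) := by ring
    linarith
  have hAS : 0 ≤ a * S := mul_nonneg ha0.le hS0
  have hTN : 0 ≤ τ * N := mul_nonneg hτ0.le hN0
  have hM0TN : 0 ≤ M0 * (τ * N) := mul_nonneg hM0pos.le hTN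
  have hM1TN : 0 ≤ M1 * (τ * N) := mul_nonneg hM1nn hTN
  have hbound : ‖∫ lam in a..1, Q lam‖ ≤
      3*(2*a*(M0*S)) + 2*(M0*(τ*N)) + 2*(M1*(a*S)) := by
    linarith [htri, hsideL, hsideR, hmid, hSB]
  calc ‖∫ lam in a..1, Q lam‖ ≤ 3*(2*a*(M0*S)) + 2*(M0*(τ*N)) + 2*(M1*(a*S)) := hbound
    _ ≤ (6*M0 + 2*M1 + 2) * (a * S + τ * N) := by nlinarith [hAS, hTN, hM0TN, hM1TN]
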